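/- Let R > 0, L > 0, M ∈ ℝ with L + (4/3)M > 0, a² ≥ 0, b² ≥ 0, c² > 0. Then there exists a constant C ∈ ℝ, depending only on a, b, c, L, M, R, such that ℰ(w₀,…,w₄) ≥ C for every w₀,…,w₄ continuously differentiable on (0,R] with all integrals appearing in ℰ finite, with lim_{r→0⁺} w_i(r) = 0 for i = 1,2,3,4, and with boundary values w₀(R) = −s₊/√6, w₁(R) = s₊/√2, w₂(R) = w₃(R) = w₄(R) = 0; i.e., the reduced energy ℰ is bounded below on the admissible set. -/

import Mathlib

open Real MeasureTheory

noncomputable section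

/-- First elastic term of the reduced energy (density against `dr`, including the factor `r`). -/
def d1 (L : ℝ) (w0 w1 : ℝ → ℝ) (r : ℝ) : ℝ :=
  (L/2) * ((deriv w1 r)^2 + (deriv w0 r)^2 + (4/r^2) * (w1 r)^2) * r

/-- Anisotropic elastic term of the reduced energy. -/
def d2 (M : ℝ) (w0 w1 : ℝ → ℝ) (r : ℝ) : ℝ :=
  (M/6) * (Real.sqrt 3 * deriv w1 r - deriv w0 r + (2 * Real.sqrt 3 / r) * w1 r)^2 * r

/-- Elastic term for the components `w₂, w₃`. -/
def d3 (L M : ℝ) (w2 w3 : ℝ → ℝ) (r : ℝ) : ℝ :=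
  ((L + M)/2) * ((deriv w2 r)^2 + (4/r^2) * (w2 r)^2
    + (deriv w3 r)^2 + (1/r^2) * (w3 r)^2) * r

/-- Elastic term for the component `w₄`. -/
def d4 (L : ℝ) (w4 : ℝ → ℝ) (r : ℝ) : ℝ :=
  (L/2) * ((deriv w4 r)^2 + (1/r^2) * (w4 r)^2) * r

/-- `σ = Σ_{i=0}^4 w_i²`. -/
def sig (w0 w1 w2 w3 w4 : ℝ → ℝ) (r : ℝ) : ℝ :=
  (w0 r)^2 + (w1 r)^2 + (w2 r)^2 + (w3 r)^2 + (w4 r)^2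

/-- Quadratic-quartic bulk term of the reduced energy. -/
def d5 (a2 c2 : ℝ) (w0 w1 w2 w3 w4 : ℝ → ℝ) (r : ℝ) : ℝ :=
  (-a2/2 + (c2/4) * sig w0 w1 w2 w3 w4 r) * sig w0 w1 w2 w3 w4 r * r

/-- Cubic bulk term of the reduced energy. -/
def d6 (b2 : ℝ) (w0 w1 w2 w3 w4 : ℝ → ℝ) (r : ℝ) : ℝ :=
  -(Real.sqrt 6 * b2 / 36) *
    (2 * (w0 r)^3 - 6 * w0 r * ((w1 r)^2 + (w2 r)^2)
      + 3 * w0 r * ((w3 r)^2 + (w4 r)^2)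
      + 3 * Real.sqrt 3 * w1 r * ((w3 r)^2 - (w4 r)^2)
      + 6 * Real.sqrt 3 * w2 r * w3 r * w4 r) * r

/-- The reduced Landau–de Gennes radial energy `ℰ(w₀,…,w₄)`. -/
def redE (L M a2 b2 c2 R : ℝ) (w0 w1 w2 w3 w4 : ℝ → ℝ) : ℝ :=
  ∫ r in Set.Ioo (0 : ℝ) R,
    (d1 L w0 w1 r + d2 M w0 w1 r + d3 L M w2 w3 r + d4 L w4 r
      + d5 a2 c2 w0 w1 w2 w3 w4 r + d6 b2 w0 w1 w2 w3 w4 r)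

/-- `s₊ = (b² + √(b⁴ + 24a²c²))/(4c²)`. -/
def sPlus (a2 b2 c2 : ℝ) : ℝ := (b2 + Real.sqrt (b2^2 + 24 * a2 * c2)) / (4 * c2)

end

open Filter Set Topology

/-! The bulk density is a quartic in `|w| = √σ` with positive leading coefficient once the cubic
term is bounded by `29 |w|³`, so it is bounded below pointwise, and `d₃, d₄ ≥ 0`. The only
indefinite part is `d₁ + d₂` for `M < 0`. Completing the square in `w₀'` gives
`d₁ + d₂ ≥ (L/2 + k) (w₁'² + 4 w₁²/r²) r + 4 k w₁' w₁` with `k = 3LM / (2(3L + M))`, where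
`L/2 + k ≥ 0` is exactly `L + 4M/3 ≥ 0`; and since `w₁(0⁺) = 0`, the cross term integrates to
`w₁(R)²/2`, which the boundary condition fixes. -/

lemma mul_div_add_mul_sq_le {p q : ℝ} (hpq : 0 < p + q) (f t : ℝ) :
    p * q / (p + q) * t ^ 2 ≤ p * f ^ 2 + q * (t - f) ^ 2 := by
  rw [div_mul_eq_mul_div, div_le_iff₀ hpq]
  nlinarith [sq_nonneg ((p + q) * f - q * t)]

lemma d1_add_d2_ge {L M r : ℝ} (hLM : 0 < 3 * L + M) (hr : 0 < r) (w0 w1 : ℝ → ℝ) :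
    (L / 2 + 3 * L * M / (2 * (3 * L + M))) * ((deriv w1 r ^ 2 + 4 / r ^ 2 * w1 r ^ 2) * r)
        + 4 * (3 * L * M / (2 * (3 * L + M))) * (deriv w1 r * w1 r)
      ≤ d1 L w0 w1 r + d2 M w0 w1 r := by
  have key := mul_div_add_mul_sq_le (p := L / 2) (q := M / 6) (by linarith) (deriv w0 r)
    (√3 * (deriv w1 r + 2 * w1 r / r))
  have h3 : √3 ^ 2 = 3 := Real.sq_sqrt (by norm_num)
  have hlhs : L / 2 * (M / 6) / (L / 2 + M / 6) * (√3 * (deriv w1 r + 2 * w1 r / r)) ^ 2 * r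
      = 3 * L * M / (2 * (3 * L + M)) * ((deriv w1 r ^ 2 + 4 / r ^ 2 * w1 r ^ 2) * r)
        + 4 * (3 * L * M / (2 * (3 * L + M))) * (deriv w1 r * w1 r) := by
    have : L / 2 + M / 6 = (3 * L + M) / 6 := by ring
    rw [this, mul_pow, h3]; field_simp; ring
  have hrhs : d1 L w0 w1 r + d2 M w0 w1 r
      = L / 2 * ((deriv w1 r ^ 2 + 4 / r ^ 2 * w1 r ^ 2) * r)
        + (L / 2 * deriv w0 r ^ 2
          + M / 6 * (√3 * (deriv w1 r + 2 * w1 r / r) - deriv w0 r) ^ 2) * r := by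
    unfold d1 d2; ring
  nlinarith [mul_le_mul_of_nonneg_right key hr.le]

lemma integral_Ioo_deriv_mul_self {u : ℝ → ℝ} {a b : ℝ} (hab : a < b)
    (hdiff : ∀ r ∈ Ioc a b, DifferentiableAt ℝ u r)
    (hint : IntegrableOn (fun r => deriv u r * u r) (Ioo a b))
    (hu : Tendsto u (𝓝[>] a) (𝓝 0)) :
    ∫ r in Ioo a b, deriv u r * u r = u b ^ 2 / 2 := by
  have hderiv : ∀ r ∈ Ioc a b, HasDerivAt (fun r => u r ^ 2 / 2) (deriv u r * u r) r := by
    intro r hr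
    exact (((hdiff r hr).hasDerivAt.fun_pow 2).div_const 2).congr_deriv (by push_cast; ring)
  have hb : Tendsto (fun r => u r ^ 2 / 2) (𝓝[<] b) (𝓝 (u b ^ 2 / 2)) :=
    (hderiv b (right_mem_Ioc.2 hab)).continuousAt.tendsto.mono_left nhdsWithin_le_nhds
  have ha : Tendsto (fun r => u r ^ 2 / 2) (𝓝[>] a) (𝓝 0) := by
    simpa using (hu.pow 2).div_const 2
  rw [← integral_Ioc_eq_integral_Ioo, ← intervalIntegral.integral_of_le hab.le,
    intervalIntegral.integral_eq_sub_of_hasDerivAt_of_tendsto hab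
      (fun r hr => hderiv r (Ioo_subset_Ioc_self hr))
      ((intervalIntegrable_iff_integrableOn_Ioo_of_le hab.le).2 hint) ha hb, sub_zero]

lemma integrableOn_deriv_sq_add_sq_of_d1 {L R : ℝ} (hL : 0 < L) {w0 w1 : ℝ → ℝ}
    (hw1 : ContinuousOn w1 (Ioo 0 R)) (hd1 : IntegrableOn (d1 L w0 w1) (Ioo 0 R)) :
    IntegrableOn (fun r => (deriv w1 r ^ 2 + 4 / r ^ 2 * w1 r ^ 2) * r) (Ioo 0 R) := by
  refine Integrable.mono' (hd1.const_mul (2 / L)) ?_ ?_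
  · have hw := hw1.aestronglyMeasurable (μ := volume) measurableSet_Ioo
    have hw' := (measurable_deriv w1).aestronglyMeasurable (μ := volume.restrict (Ioo 0 R))
    have h4 := (by fun_prop : Measurable fun r : ℝ => 4 / r ^ 2).aestronglyMeasurable
      (μ := volume.restrict (Ioo 0 R))
    exact ((hw'.pow 2).add (h4.mul (hw.pow 2))).mul aestronglyMeasurable_id
  · filter_upwards [ae_restrict_mem measurableSet_Ioo] with r hr
    have hr0 := hr.1
    rw [Real.norm_of_nonneg (by positivity)]
    unfold d1
    field_simp
    nlinarith [sq_nonneg (deriv w0 r)]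

lemma integrableOn_deriv_mul_self {R : ℝ} {w : ℝ → ℝ} (hw : ContinuousOn w (Ioo 0 R))
    (hE : IntegrableOn (fun r => (deriv w r ^ 2 + 4 / r ^ 2 * w r ^ 2) * r) (Ioo 0 R)) :
    IntegrableOn (fun r => deriv w r * w r) (Ioo 0 R) := by
  refine Integrable.mono' hE
    ((measurable_deriv w).aestronglyMeasurable.mul (hw.aestronglyMeasurable measurableSet_Ioo)) ?_
  filter_upwards [ae_restrict_mem measurableSet_Ioo] with r hr
  have hr0 := hr.1
  rw [Real.norm_eq_abs, ← mul_le_mul_iff_left₀ hr0]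
  field_simp
  rcases abs_cases (deriv w r * w r) with ⟨h, _⟩ | ⟨h, _⟩ <;> rw [h] <;>
    nlinarith [sq_nonneg (deriv w r * r - 2 * w r), sq_nonneg (deriv w r * r + 2 * w r)]

lemma integral_d1_add_d2_ge {L M R : ℝ} (hR : 0 < R) (hL : 0 < L) (hLM : 0 < L + 4 / 3 * M)
    {w0 w1 : ℝ → ℝ} (hdiff : ∀ r ∈ Ioc 0 R, DifferentiableAt ℝ w1 r)
    (hd1 : IntegrableOn (d1 L w0 w1) (Ioo 0 R)) (hd2 : IntegrableOn (d2 M w0 w1) (Ioo 0 R))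
    (hw1 : Tendsto w1 (𝓝[>] 0) (𝓝 0)) :
    2 * (3 * L * M / (2 * (3 * L + M))) * w1 R ^ 2
      ≤ ∫ r in Ioo 0 R, (d1 L w0 w1 r + d2 M w0 w1 r) := by
  have h3LM : 0 < 3 * L + M := by linarith
  have hk : 0 ≤ L / 2 + 3 * L * M / (2 * (3 * L + M)) := by
    rw [show L / 2 + 3 * L * M / (2 * (3 * L + M)) = L * (3 * L + 4 * M) / (2 * (3 * L + M)) by
      rw [div_add_div _ _ two_ne_zero (by positivity),
        div_eq_div_iff (by positivity) (by positivity)]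
      ring]
    exact div_nonneg (mul_nonneg hL.le (by linarith)) (by linarith)
  set k := 3 * L * M / (2 * (3 * L + M))
  set E := fun r => (deriv w1 r ^ 2 + 4 / r ^ 2 * w1 r ^ 2) * r
  set H := fun r => deriv w1 r * w1 r
  have hcont : ContinuousOn w1 (Ioo 0 R) := fun r hr =>
    (hdiff r (Ioo_subset_Ioc_self hr)).continuousAt.continuousWithinAt
  have hE : IntegrableOn E (Ioo 0 R) := integrableOn_deriv_sq_add_sq_of_d1 hL hcont hd1
  have hH : IntegrableOn H (Ioo 0 R) := integrableOn_deriv_mul_self hcont hE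
  have hE0 : 0 ≤ ∫ r in Ioo 0 R, E r :=
    setIntegral_nonneg measurableSet_Ioo fun r hr => by have := hr.1; positivity
  calc 2 * k * w1 R ^ 2 = 4 * k * ∫ r in Ioo 0 R, H r := by
        rw [integral_Ioo_deriv_mul_self hR hdiff hH hw1]; ring
    _ ≤ (L / 2 + k) * (∫ r in Ioo 0 R, E r) + 4 * k * ∫ r in Ioo 0 R, H r := by
        nlinarith [mul_nonneg hk hE0]
    _ = ∫ r in Ioo 0 R, ((L / 2 + k) * E r + 4 * k * H r) := by
        rw [integral_add (hE.const_mul _) (hH.const_mul _), integral_const_mul, integral_const_mul]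
    _ ≤ ∫ r in Ioo 0 R, (d1 L w0 w1 r + d2 M w0 w1 r) :=
        setIntegral_mono_on ((hE.const_mul _).add (hH.const_mul _)) (hd1.add hd2) measurableSet_Ioo
          fun r hr => d1_add_d2_ge h3LM hr.1 w0 w1

noncomputable def cubicTerm (x0 x1 x2 x3 x4 : ℝ) : ℝ :=
  2 * x0 ^ 3 - 6 * x0 * (x1 ^ 2 + x2 ^ 2) + 3 * x0 * (x3 ^ 2 + x4 ^ 2)
    + 3 * √3 * x1 * (x3 ^ 2 - x4 ^ 2) + 6 * √3 * x2 * x3 * x4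

lemma cubicTerm_le {x0 x1 x2 x3 x4 m : ℝ} (hm : 0 ≤ m)
    (hσ : x0 ^ 2 + x1 ^ 2 + x2 ^ 2 + x3 ^ 2 + x4 ^ 2 = m ^ 2) :
    cubicTerm x0 x1 x2 x3 x4 ≤ 29 * m ^ 3 := by
  have hmul {a s : ℝ} (ha : |a| ≤ m) (hs : |s| ≤ m ^ 2) : a * s ≤ m ^ 3 :=
    calc a * s ≤ |a| * |s| := by rw [← abs_mul]; exact le_abs_self _
      _ ≤ m * m ^ 2 := mul_le_mul ha hs (abs_nonneg _) hm
      _ = m ^ 3 := by ring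
  have habs {x : ℝ} (hx : x ^ 2 ≤ m ^ 2) : |x| ≤ m := abs_le_of_sq_le_sq hx hm
  have hsq {s : ℝ} (h0 : 0 ≤ s) (hs : s ≤ m ^ 2) : |s| ≤ m ^ 2 := by rwa [abs_of_nonneg h0]
  have t1 : x0 * x0 ^ 2 ≤ m ^ 3 := hmul (habs (by nlinarith)) (hsq (by positivity) (by nlinarith))
  have t2 : -x0 * (x1 ^ 2 + x2 ^ 2) ≤ m ^ 3 :=
    hmul (by rw [abs_neg]; exact habs (by nlinarith)) (hsq (by positivity) (by nlinarith))
  have t3 : x0 * (x3 ^ 2 + x4 ^ 2) ≤ m ^ 3 :=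
    hmul (habs (by nlinarith)) (hsq (by positivity) (by nlinarith))
  have t4 : x1 * (x3 ^ 2 - x4 ^ 2) ≤ m ^ 3 :=
    hmul (habs (by nlinarith)) (abs_le.2 ⟨by nlinarith, by nlinarith⟩)
  have t5 : x2 * (x3 * x4) ≤ m ^ 3 :=
    hmul (habs (by nlinarith))
      (by rw [abs_le]; constructor <;> nlinarith [sq_nonneg (x3 + x4), sq_nonneg (x3 - x4)])
  have h3 : √3 ≤ 2 := by
    rw [Real.sqrt_le_left (by norm_num)]; norm_num
  have hm3 : 0 ≤ m ^ 3 := by positivity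
  unfold cubicTerm
  nlinarith [mul_le_mul_of_nonneg_left t4 (Real.sqrt_nonneg 3),
    mul_le_mul_of_nonneg_left t5 (Real.sqrt_nonneg 3), mul_le_mul_of_nonneg_right h3 hm3]

lemma quartic_ge {c : ℝ} (hc : 0 < c) (A B m : ℝ) :
    -(2 * (A + 2 * B ^ 2 / c) ^ 2 / c) ≤ c / 4 * m ^ 4 - B * m ^ 3 - A * m ^ 2 := by
  have key : c / 4 * m ^ 4 - B * m ^ 3 - A * m ^ 2 + 2 * (A + 2 * B ^ 2 / c) ^ 2 / c
      = c / 8 * (m ^ 2 - 4 * B * m / c) ^ 2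
        + c / 8 * (m ^ 2 - 4 * (A + 2 * B ^ 2 / c) / c) ^ 2 := by
    field_simp; ring
  have : 0 ≤ c / 8 * (m ^ 2 - 4 * B * m / c) ^ 2
      + c / 8 * (m ^ 2 - 4 * (A + 2 * B ^ 2 / c) / c) ^ 2 := by positivity
  linarith

lemma d5_add_d6_ge {a2 b2 c2 r : ℝ} (hb : 0 ≤ b2) (hc : 0 < c2) (hr : 0 ≤ r)
    (w0 w1 w2 w3 w4 : ℝ → ℝ) :
    -(2 * (a2 / 2 + 8 * b2 ^ 2 / c2) ^ 2 / c2) * r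
      ≤ d5 a2 c2 w0 w1 w2 w3 w4 r + d6 b2 w0 w1 w2 w3 w4 r := by
  set m := √(sig w0 w1 w2 w3 w4 r)
  have hm : m ^ 2 = sig w0 w1 w2 w3 w4 r := Real.sq_sqrt (by unfold sig; positivity)
  have hcubic :
      √6 * b2 / 36 * cubicTerm (w0 r) (w1 r) (w2 r) (w3 r) (w4 r) ≤ 2 * b2 * m ^ 3 := by
    have h6 : √6 * 29 ≤ 72 := by
      nlinarith [Real.sq_sqrt (show (0 : ℝ) ≤ 6 by norm_num), Real.sqrt_nonneg 6]
    have := mul_le_mul_of_nonneg_left (cubicTerm_le (Real.sqrt_nonneg _) hm.symm)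
      (by positivity : 0 ≤ √6 * b2 / 36)
    nlinarith [mul_nonneg hb (by positivity : 0 ≤ m ^ 3)]
  have hsum : d5 a2 c2 w0 w1 w2 w3 w4 r + d6 b2 w0 w1 w2 w3 w4 r
      = (c2 / 4 * m ^ 4 - a2 / 2 * m ^ 2
          - √6 * b2 / 36 * cubicTerm (w0 r) (w1 r) (w2 r) (w3 r) (w4 r)) * r := by
    rw [show m ^ 4 = (m ^ 2) ^ 2 by ring, hm]
    unfold d5 d6 cubicTerm
    ring
  rw [hsum]
  refine mul_le_mul_of_nonneg_right ?_ hr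
  have hquartic := quartic_ge hc (a2 / 2) (2 * b2) m
  rw [show 2 * (2 * b2) ^ 2 = 8 * b2 ^ 2 by ring] at hquartic
  linarith

lemma integral_d5_add_d6_ge {a2 b2 c2 R : ℝ} (hR : 0 ≤ R) (hb : 0 ≤ b2) (hc : 0 < c2)
    {w0 w1 w2 w3 w4 : ℝ → ℝ}
    (hd5 : IntegrableOn (d5 a2 c2 w0 w1 w2 w3 w4) (Ioo 0 R))
    (hd6 : IntegrableOn (d6 b2 w0 w1 w2 w3 w4) (Ioo 0 R)) :
    -(2 * (a2 / 2 + 8 * b2 ^ 2 / c2) ^ 2 / c2) * R * R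
      ≤ ∫ r in Ioo 0 R, (d5 a2 c2 w0 w1 w2 w3 w4 r + d6 b2 w0 w1 w2 w3 w4 r) := by
  have hK : 0 ≤ 2 * (a2 / 2 + 8 * b2 ^ 2 / c2) ^ 2 / c2 := by positivity
  simpa [Real.volume_real_Ioo_of_le hR] using
    setIntegral_ge_of_const_le_real measurableSet_Ioo measure_Ioo_lt_top.ne
      (fun r hr => (mul_le_mul_of_nonpos_left hr.2.le (neg_nonpos.2 hK)).trans
        (d5_add_d6_ge hb hc hr.1.le w0 w1 w2 w3 w4)) (hd5.add hd6)

lemma d3_nonneg {L M r : ℝ} (hLM : 0 ≤ L + M) (hr : 0 ≤ r) (w2 w3 : ℝ → ℝ) :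
    0 ≤ d3 L M w2 w3 r := by
  unfold d3
  have : 0 ≤ (L + M) / 2 := by linarith
  positivity

lemma d4_nonneg {L r : ℝ} (hL : 0 ≤ L) (hr : 0 ≤ r) (w4 : ℝ → ℝ) : 0 ≤ d4 L w4 r := by
  unfold d4
  positivity

lemma redE_eq {L M a2 b2 c2 R : ℝ} {w0 w1 w2 w3 w4 : ℝ → ℝ}
    (hd1 : IntegrableOn (d1 L w0 w1) (Ioo 0 R)) (hd2 : IntegrableOn (d2 M w0 w1) (Ioo 0 R))
    (hd3 : IntegrableOn (d3 L M w2 w3) (Ioo 0 R)) (hd4 : IntegrableOn (d4 L w4) (Ioo 0 R))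
    (hd5 : IntegrableOn (d5 a2 c2 w0 w1 w2 w3 w4) (Ioo 0 R))
    (hd6 : IntegrableOn (d6 b2 w0 w1 w2 w3 w4) (Ioo 0 R)) :
    redE L M a2 b2 c2 R w0 w1 w2 w3 w4
      = (∫ r in Ioo 0 R, (d1 L w0 w1 r + d2 M w0 w1 r)) + (∫ r in Ioo 0 R, d3 L M w2 w3 r)
        + (∫ r in Ioo 0 R, d4 L w4 r)
        + ∫ r in Ioo 0 R, (d5 a2 c2 w0 w1 w2 w3 w4 r + d6 b2 w0 w1 w2 w3 w4 r) := by
  calc redE L M a2 b2 c2 R w0 w1 w2 w3 w4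
      = ∫ r in Ioo 0 R, ((d1 L w0 w1 r + d2 M w0 w1 r) + d3 L M w2 w3 r + d4 L w4 r
          + (d5 a2 c2 w0 w1 w2 w3 w4 r + d6 b2 w0 w1 w2 w3 w4 r)) := by
        unfold redE
        congr 1 with r
        ring
    _ = _ := by
        rw [integral_add (by exact ((hd1.add hd2).add hd3).add hd4) (by exact hd5.add hd6),
          integral_add (by exact (hd1.add hd2).add hd3) hd4,
          integral_add (by exact hd1.add hd2) hd3]

theorem reduced_energy_bounded_below
    (R L M a2 b2 c2 : ℝ) (hR : 0 < R) (hL : 0 < L) (hLM : 0 < L + (4/3) * M)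
    (hb : 0 ≤ b2) (hc : 0 < c2) :
    ∃ C : ℝ, ∀ w : Fin 5 → ℝ → ℝ,
      (∀ i : Fin 5, ∀ r ∈ Set.Ioc (0 : ℝ) R, DifferentiableAt ℝ (w i) r) →
      (∀ i : Fin 5, ContinuousOn (deriv (w i)) (Set.Ioc 0 R)) →
      IntegrableOn (d1 L (w 0) (w 1)) (Set.Ioo 0 R) →
      IntegrableOn (d2 M (w 0) (w 1)) (Set.Ioo 0 R) →
      IntegrableOn (d3 L M (w 2) (w 3)) (Set.Ioo 0 R) →
      IntegrableOn (d4 L (w 4)) (Set.Ioo 0 R) →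
      IntegrableOn (d5 a2 c2 (w 0) (w 1) (w 2) (w 3) (w 4)) (Set.Ioo 0 R) →
      IntegrableOn (d6 b2 (w 0) (w 1) (w 2) (w 3) (w 4)) (Set.Ioo 0 R) →
      (∀ i : Fin 5, i ≠ 0 →
        Filter.Tendsto (w i) (nhdsWithin 0 (Set.Ioi 0)) (nhds 0)) →
      w 0 R = -(sPlus a2 b2 c2) / Real.sqrt 6 →
      w 1 R = sPlus a2 b2 c2 / Real.sqrt 2 →
      w 2 R = 0 → w 3 R = 0 → w 4 R = 0 →
      C ≤ redE L M a2 b2 c2 R (w 0) (w 1) (w 2) (w 3) (w 4) := by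
  refine ⟨3 * L * M / (2 * (3 * L + M)) * sPlus a2 b2 c2 ^ 2
    - 2 * (a2 / 2 + 8 * b2 ^ 2 / c2) ^ 2 / c2 * R * R, ?_⟩
  intro w hdiff _ hd1 hd2 hd3 hd4 hd5 hd6 hlim _ hw1R _ _ _
  have hw1R_sq : w 1 R ^ 2 = sPlus a2 b2 c2 ^ 2 / 2 := by
    rw [hw1R, div_pow, Real.sq_sqrt zero_le_two]
  have h12 := integral_d1_add_d2_ge hR hL hLM (hdiff 1) hd1 hd2 (hlim 1 (by decide))
  have h3 : 0 ≤ ∫ r in Ioo 0 R, d3 L M (w 2) (w 3) r :=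
    setIntegral_nonneg measurableSet_Ioo fun r hr => d3_nonneg (by linarith) hr.1.le _ _
  have h4 : 0 ≤ ∫ r in Ioo 0 R, d4 L (w 4) r :=
    setIntegral_nonneg measurableSet_Ioo fun r hr => d4_nonneg hL.le hr.1.le _
  have h56 := integral_d5_add_d6_ge hR.le hb hc hd5 hd6
  rw [hw1R_sq] at h12
  rw [redE_eq hd1 hd2 hd3 hd4 hd5 hd6]
  linarith
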